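/- Let p be a prime, l ≥ 1, d ≥ 1, m ≥ 1 integers, c ∈ ℚ_p nonzero, and θ ∈ ℤ_p not equal to the image of any natural number. Then the following three conditions are equivalent: (1) l divides m, and for every integer a coprime to p one has a^m ≡ 1 (mod p^{ld − (ν_p(c) mod l)}); (2) the sequence (ℓ_{p^l,d}(c·(n−θ)^m))_{n≥0} is eventually periodic; (3) ℓ_{p^l,d}(c·(n−θ)^m) = ℓ_{p^l,d}(c) for every n ∈ ℕ. -/

import Mathlib

/-- The `k`-kernel of a sequence: the set of subsequences `n ↦ a (k^i·n + j)`
for `i ≥ 0` and `0 ≤ j ≤ k^i - 1`. -/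
def kKernel {R : Type*} (k : ℕ) (a : ℕ → R) : Set (ℕ → R) :=
  {c | ∃ i j : ℕ, j < k ^ i ∧ c = fun n => a (k ^ i * n + j)}

/-- A sequence is `k`-automatic if its `k`-kernel is a finite set. -/
def IsKAutomatic {R : Type*} (k : ℕ) (a : ℕ → R) : Prop :=
  (kKernel k a).Finite

/-- A sequence with values in a `ℤ`-module is `k`-regular if the `ℤ`-submodule
of the module of all sequences generated by its `k`-kernel is finitely generated. -/
def IsKRegular {R : Type*} [AddCommGroup R] (k : ℕ) (a : ℕ → R) : Prop :=
  (Submodule.span ℤ (kKernel k a)).FG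

/-- `k` and `m` are multiplicatively independent if `k^a = m^b` forces `a = b = 0`. -/
def MultiplicativelyIndependent (k m : ℕ) : Prop :=
  ∀ a b : ℕ, k ^ a = m ^ b → a = 0 ∧ b = 0

/-- Strictly `k`-regular: `k`-regular but not `m`-regular for every `m ≥ 2`
multiplicatively independent of `k`. -/
def StrictlyKRegular {R : Type*} [AddCommGroup R] (k : ℕ) (a : ℕ → R) : Prop :=
  IsKRegular k a ∧ ∀ m : ℕ, 2 ≤ m → MultiplicativelyIndependent k m → ¬ IsKRegular m a

/-- Strictly `k`-automatic: `k`-automatic but not `m`-automatic for every `m ≥ 2`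
multiplicatively independent of `k`. -/
def StrictlyKAutomatic {R : Type*} (k : ℕ) (a : ℕ → R) : Prop :=
  IsKAutomatic k a ∧ ∀ m : ℕ, 2 ≤ m → MultiplicativelyIndependent k m → ¬ IsKAutomatic m a

/-- `f : ℤ_p → ℚ_p` is analytic if it is given by a power series converging
(to `f x`) at every point `x ∈ ℤ_p`. -/
def IsPadicAnalytic {p : ℕ} [Fact p.Prime] (f : ℤ_[p] → ℚ_[p]) : Prop :=
  ∃ c : ℕ → ℚ_[p], ∀ x : ℤ_[p], HasSum (fun i => c i * (x : ℚ_[p]) ^ i) (f x)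

/-- The set of roots of `f` in `ℤ_p`. -/
def padicRootSet {p : ℕ} [Fact p.Prime] (f : ℤ_[p] → ℚ_[p]) : Set ℤ_[p] :=
  {θ | f θ = 0}

/-- A `p`-adic integer is rational if it is the image of a rational number. -/
def IsRationalPadicInt {p : ℕ} [Fact p.Prime] (θ : ℤ_[p]) : Prop :=
  ∃ q : ℚ, (θ : ℚ_[p]) = (q : ℚ_[p])

/-- `θ` is a root of `f` of multiplicity `m`:
`f x = (x - θ)^m · g x` with `g` analytic and `g θ ≠ 0`. -/
def HasRootMultiplicity {p : ℕ} [Fact p.Prime] (f : ℤ_[p] → ℚ_[p]) (θ : ℤ_[p]) (m : ℕ) : Prop :=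
  ∃ g : ℤ_[p] → ℚ_[p], IsPadicAnalytic g ∧ g θ ≠ 0 ∧
    ∀ x : ℤ_[p], f x = ((x : ℚ_[p]) - (θ : ℚ_[p])) ^ m * g x

/-- `ν_{p^l}(x) = ⌊ν_p(x)/l⌋` (with junk value `0` at `x = 0`). -/
noncomputable def nuPow (p : ℕ) [Fact p.Prime] (l : ℕ) (x : ℚ_[p]) : ℤ :=
  x.valuation / (l : ℤ)

open Classical in
/-- `ℒ_{p^l}(x) = p^{-l·ν_{p^l}(x)}·x ∈ ℤ_p`, with `ℒ_{p^l}(0) = 0`. -/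
noncomputable def padicL (p : ℕ) [hp : Fact p.Prime] (l : ℕ) (x : ℚ_[p]) : ℤ_[p] :=
  if h : x = 0 ∨ l = 0 then 0
  else ⟨(p : ℚ_[p]) ^ (-((l : ℤ) * nuPow p l x)) * x, by
    push_neg at h
    obtain ⟨hx, hl⟩ := h
    have hp0 : (p : ℚ_[p]) ≠ 0 := Nat.cast_ne_zero.mpr hp.out.ne_zero
    have hz : (p : ℚ_[p]) ^ (-((l : ℤ) * nuPow p l x)) ≠ 0 := zpow_ne_zero _ hp0
    rw [Padic.norm_le_one_iff_val_nonneg, Padic.valuation_mul hz hx]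
    have hvz : ((p : ℚ_[p]) ^ (-((l : ℤ) * nuPow p l x))).valuation
        = -((l : ℤ) * nuPow p l x) := by
      rw [Padic.valuation_zpow, Padic.valuation_p, mul_one]
    rw [hvz, nuPow]
    have hl' : (0 : ℤ) < (l : ℤ) := by exact_mod_cast Nat.pos_of_ne_zero hl
    have := Int.emod_nonneg x.valuation (by exact_mod_cast hl : (l : ℤ) ≠ 0)
    have heq := Int.emod_add_mul_ediv x.valuation (l : ℤ)
    omega⟩

/-- `ℓ_{p^l,d}(x) = ℒ_{p^l}(x) mod p^{ld} ∈ ℤ/p^{ld}ℤ`. -/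
noncomputable def padicEll (p : ℕ) [Fact p.Prime] (l d : ℕ) (x : ℚ_[p]) : ZMod (p ^ (l * d)) :=
  PadicInt.toZModPow (l * d) (padicL p l x)

/-- A sequence is eventually periodic. -/
def EventuallyPeriodic {R : Type*} (a : ℕ → R) : Prop :=
  ∃ T : ℕ, 1 ≤ T ∧ ∃ N : ℕ, ∀ n : ℕ, N ≤ n → a (n + T) = a n

/-!
Write `n - θ = p^k w` with `w` a unit. When `l ∣ m` the factor `p^(km)` is a power of `p^l`, which
`ℒ_{p^l}` ignores, so `ℓ_{p^l,d}(c (n - θ)^m) = ℒ_{p^l}(c) w^m mod p^(ld)`. As `ℒ_{p^l}(c)` has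
valuation `r = ν_p(c) mod l`, this only depends on `w^m mod p^(ld - r)`, and condition (1) says that
`w^m ≡ 1` there for every unit `w`.

Conversely, write a period as `T = p^t u`. For any `s` and any unit `w` there are arbitrarily large
`n` with `n - θ = p^(t+s) w'`, `w' ≡ w mod p^s`, and then `n + T - θ = p^t (u + p^s w')`.
For `s = 1` the two arguments have valuations differing by `m`, while `ℓ_{p^l,d}` determines the
valuation mod `l`: hence `l ∣ m`. For `s = ld - r` periodicity gives `w^m ≡ u^m` for all units
`w`, and `w = 1` gives `u^m ≡ 1`.
-/

namespace PadicInt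

variable {p : ℕ} [Fact p.Prime]

theorem toZModPow_eq_iff_dvd {n : ℕ} {a b : ℤ_[p]} :
    toZModPow n a = toZModPow n b ↔ (p : ℤ_[p]) ^ n ∣ a - b := by
  rw [← sub_eq_zero, ← map_sub, ← RingHom.mem_ker, ker_toZModPow, Ideal.mem_span_singleton]

theorem toZModPow_add_p_pow_mul (n : ℕ) (a b : ℤ_[p]) :
    toZModPow n (a + (p : ℤ_[p]) ^ n * b) = toZModPow n a := by
  rw [map_add, map_mul, map_pow, map_natCast, ← Nat.cast_pow, ZMod.natCast_self, zero_mul,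
    add_zero]

theorem valuation_of_isUnit {w : ℤ_[p]} (hw : IsUnit w) : w.valuation = 0 := by
  obtain ⟨u, rfl⟩ := hw
  have h := valuation_mul u.ne_zero u⁻¹.ne_zero
  rw [Units.mul_inv, valuation_one] at h
  omega

theorem valuation_p_pow_mul_of_isUnit (k : ℕ) {w : ℤ_[p]} (hw : IsUnit w) :
    ((p : ℤ_[p]) ^ k * w).valuation = k := by
  rw [valuation_p_pow_mul _ _ hw.ne_zero, valuation_of_isUnit hw, add_zero]

theorem isUnit_add_p_pow_mul {b : ℤ_[p]} (hb : IsUnit b) {s : ℕ} (hs : s ≠ 0) (y : ℤ_[p]) :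
    IsUnit (b + (p : ℤ_[p]) ^ s * y) := by
  have hsum : IsUnit ((b + (p : ℤ_[p]) ^ s * y) + -((p : ℤ_[p]) ^ s * y)) := by simpa using hb
  refine (IsLocalRing.isUnit_or_isUnit_of_isUnit_add hsum).resolve_right fun h =>
    p_nonunit (p := p) ?_
  exact (isUnit_pow_iff hs).mp (isUnit_of_mul_isUnit_left ((IsUnit.neg_iff _).mp h))

theorem exists_eq_p_pow_mul {x : ℤ_[p]} (hx : x ≠ 0) :
    ∃ (k : ℕ) (w : ℤ_[p]), IsUnit w ∧ x = (p : ℤ_[p]) ^ k * w :=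
  ⟨x.valuation, unitCoeff hx, Units.isUnit _, by rw [mul_comm]; exact unitCoeff_spec hx⟩

theorem valuation_le_of_toZModPow_eq {N : ℕ} {a b : ℤ_[p]} (ha : a ≠ 0) (hb : b ≠ 0)
    (hbN : b.valuation ≤ N) (h : toZModPow N a = toZModPow N b) :
    b.valuation ≤ a.valuation := by
  have hpb : (p : ℤ_[p]) ^ b.valuation ∣ b := by
    rw [← Ideal.mem_span_singleton, mem_span_pow_iff_le_valuation b hb]
  have hpab : (p : ℤ_[p]) ^ b.valuation ∣ a - b :=
    (pow_dvd_pow _ hbN).trans (toZModPow_eq_iff_dvd.mp h)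
  rw [← mem_span_pow_iff_le_valuation a ha, Ideal.mem_span_singleton]
  simpa using dvd_add hpab hpb

theorem toZModPow_mul_eq_iff {N : ℕ} {x : ℤ_[p]} (hx : x ≠ 0) (hN : x.valuation ≤ N)
    (a b : ℤ_[p]) :
    toZModPow N (x * a) = toZModPow N (x * b) ↔
      toZModPow (N - x.valuation) a = toZModPow (N - x.valuation) b := by
  have hpN : (p : ℤ_[p]) ^ N = (p : ℤ_[p]) ^ x.valuation * (p : ℤ_[p]) ^ (N - x.valuation) := by
    rw [← pow_add, Nat.add_sub_cancel' hN]
  have hxab : x * a - x * b = (p : ℤ_[p]) ^ x.valuation * (unitCoeff hx * (a - b)) := by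
    conv_lhs => rw [unitCoeff_spec hx]
    ring
  rw [toZModPow_eq_iff_dvd, toZModPow_eq_iff_dvd, hpN, hxab,
    mul_dvd_mul_iff_left (pow_ne_zero _ (NeZero.ne _)), Units.dvd_mul_left]

theorem exists_natCast_eq_add_p_pow_mul (z : ℤ_[p]) (j N : ℕ) :
    ∃ n : ℕ, N ≤ n ∧ ∃ y : ℤ_[p], (n : ℤ_[p]) = z + (p : ℤ_[p]) ^ j * y := by
  obtain ⟨y, hy⟩ := Ideal.mem_span_singleton.mp (appr_spec j z)
  refine ⟨z.appr j + p ^ j * N, ?_, N - y, ?_⟩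
  · nlinarith [Nat.one_le_pow j p (Fact.out : p.Prime).pos]
  · push_cast
    linear_combination (-1 : ℤ_[p]) * hy

end PadicInt

section padicL

variable {p : ℕ} [Fact p.Prime] {l : ℕ}

theorem coe_padicL (hl : l ≠ 0) {x : ℚ_[p]} (hx : x ≠ 0) :
    (padicL p l x : ℚ_[p]) = (p : ℚ_[p]) ^ (-((l : ℤ) * nuPow p l x)) * x := by
  simp [padicL, hx, hl]

theorem padicL_zero_left (x : ℚ_[p]) : padicL p 0 x = 0 := by simp [padicL]

theorem padicL_zero : padicL p l 0 = 0 := by simp [padicL]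

theorem padicL_ne_zero (hl : l ≠ 0) {x : ℚ_[p]} (hx : x ≠ 0) : padicL p l x ≠ 0 := by
  intro h
  have h' := congrArg ((↑) : ℤ_[p] → ℚ_[p]) h
  rw [coe_padicL hl hx, PadicInt.coe_zero] at h'
  exact mul_ne_zero (zpow_ne_zero _ (by exact_mod_cast (NeZero.ne p))) hx h'

theorem valuation_padicL (hl : l ≠ 0) {x : ℚ_[p]} (hx : x ≠ 0) :
    ((padicL p l x).valuation : ℤ) = x.valuation % l := by
  rw [← PadicInt.valuation_coe, coe_padicL hl hx,
    Padic.valuation_mul (zpow_ne_zero _ (by exact_mod_cast (NeZero.ne p))) hx,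
    Padic.valuation_zpow, Padic.valuation_p, mul_one, nuPow, Int.emod_def]
  ring

theorem valuation_padicL_lt (hl : l ≠ 0) {x : ℚ_[p]} (hx : x ≠ 0) :
    (padicL p l x).valuation < l := by
  have h := valuation_padicL hl hx
  have hlt := Int.emod_lt_of_pos x.valuation (by omega : (0 : ℤ) < l)
  omega

theorem valuation_padicL_lt_mul (hl : l ≠ 0) {d : ℕ} (hd : d ≠ 0) {x : ℚ_[p]} (hx : x ≠ 0) :
    (padicL p l x).valuation < l * d :=
  (valuation_padicL_lt hl hx).trans_le (Nat.le_mul_of_pos_right l (Nat.pos_of_ne_zero hd))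

theorem padicL_mul_unit {w : ℤ_[p]} (hw : IsUnit w) (x : ℚ_[p]) :
    padicL p l (x * w) = padicL p l x * w := by
  rcases eq_or_ne l 0 with rfl | hl
  · simp [padicL_zero_left]
  rcases eq_or_ne x 0 with rfl | hx
  · simp [padicL_zero]
  have hw0 : (w : ℚ_[p]) ≠ 0 := PadicInt.coe_ne_zero.mpr hw.ne_zero
  apply Subtype.ext
  rw [PadicInt.coe_mul, coe_padicL hl (mul_ne_zero hx hw0), coe_padicL hl hx, nuPow, nuPow,
    Padic.valuation_mul hx hw0, PadicInt.valuation_coe, PadicInt.valuation_of_isUnit hw]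
  simp only [Nat.cast_zero, add_zero, mul_assoc]

theorem padicL_p_pow_mul (j : ℕ) (x : ℚ_[p]) :
    padicL p l ((p : ℚ_[p]) ^ (l * j) * x) = padicL p l x := by
  rcases eq_or_ne l 0 with rfl | hl
  · simp [padicL_zero_left]
  rcases eq_or_ne x 0 with rfl | hx
  · simp [padicL_zero]
  have hp : (p : ℚ_[p]) ≠ 0 := by exact_mod_cast (NeZero.ne p)
  apply Subtype.ext
  rw [coe_padicL hl (mul_ne_zero (pow_ne_zero _ hp) hx), coe_padicL hl hx, nuPow, nuPow,
    Padic.valuation_mul (pow_ne_zero _ hp) hx, Padic.valuation_pow, Padic.valuation_p,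
    mul_one]
  have hq : (((l * j : ℕ) : ℤ) + x.valuation) / l = j + x.valuation / l := by
    rw [Nat.cast_mul, add_comm, mul_comm, Int.add_mul_ediv_right _ _ (by exact_mod_cast hl)]
    ring
  rw [hq, mul_add, neg_add, zpow_add₀ hp, ← Nat.cast_mul, zpow_neg, zpow_natCast]
  field_simp

end padicL

section padicEll

variable {p : ℕ} [Fact p.Prime] {l d m : ℕ} {c : ℚ_[p]}

theorem valuation_mul_coe_pow (hc : c ≠ 0) {x : ℤ_[p]} (hx : x ≠ 0) :
    (c * (x : ℚ_[p]) ^ m).valuation = c.valuation + m * x.valuation := by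
  rw [Padic.valuation_mul hc (pow_ne_zero _ (PadicInt.coe_ne_zero.mpr hx)), Padic.valuation_pow,
    PadicInt.valuation_coe]

theorem valuation_emod_eq_of_padicEll_eq (hl : l ≠ 0) (hd : d ≠ 0) {x y : ℚ_[p]} (hx : x ≠ 0)
    (hy : y ≠ 0) (h : padicEll p l d x = padicEll p l d y) :
    x.valuation % l = y.valuation % l := by
  rw [← valuation_padicL hl hx, ← valuation_padicL hl hy,
    le_antisymm (PadicInt.valuation_le_of_toZModPow_eq (padicL_ne_zero hl hy)
        (padicL_ne_zero hl hx) (valuation_padicL_lt_mul hl hd hx).le h.symm)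
      (PadicInt.valuation_le_of_toZModPow_eq (padicL_ne_zero hl hx) (padicL_ne_zero hl hy)
        (valuation_padicL_lt_mul hl hd hy).le h)]

theorem valuation_emod_eq_of_padicEll_mul_pow_eq (hl : l ≠ 0) (hd : d ≠ 0) (hc : c ≠ 0)
    {k k' : ℕ} {w w' : ℤ_[p]} (hw : IsUnit w) (hw' : IsUnit w')
    (h : padicEll p l d (c * (((p : ℤ_[p]) ^ k * w : ℤ_[p]) : ℚ_[p]) ^ m) =
      padicEll p l d (c * (((p : ℤ_[p]) ^ k' * w' : ℤ_[p]) : ℚ_[p]) ^ m)) :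
    (c.valuation + m * k) % l = (c.valuation + m * k') % l := by
  have hx0 : ∀ (k : ℕ) {w : ℤ_[p]}, IsUnit w → (p : ℤ_[p]) ^ k * w ≠ 0 :=
    fun k w hw => mul_ne_zero (pow_ne_zero _ (NeZero.ne _)) hw.ne_zero
  have hne : ∀ (k : ℕ) {w : ℤ_[p]}, IsUnit w →
      c * (((p : ℤ_[p]) ^ k * w : ℤ_[p]) : ℚ_[p]) ^ m ≠ 0 :=
    fun k w hw => mul_ne_zero hc (pow_ne_zero _ (PadicInt.coe_ne_zero.mpr (hx0 k hw)))
  have hmod := valuation_emod_eq_of_padicEll_eq hl hd (hne _ hw) (hne _ hw') h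
  rwa [valuation_mul_coe_pow hc (hx0 _ hw), valuation_mul_coe_pow hc (hx0 _ hw'),
    PadicInt.valuation_p_pow_mul_of_isUnit _ hw, PadicInt.valuation_p_pow_mul_of_isUnit _ hw']
    at hmod

theorem padicEll_mul_pow (hlm : l ∣ m) (k : ℕ) {w : ℤ_[p]} (hw : IsUnit w) :
    padicEll p l d (c * (((p : ℤ_[p]) ^ k * w : ℤ_[p]) : ℚ_[p]) ^ m) =
      PadicInt.toZModPow (l * d) (padicL p l c * w ^ m) := by
  obtain ⟨j, rfl⟩ := hlm
  have hfactor : c * (((p : ℤ_[p]) ^ k * w : ℤ_[p]) : ℚ_[p]) ^ (l * j) =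
      (p : ℚ_[p]) ^ (l * (k * j)) * c * ((w ^ (l * j) : ℤ_[p]) : ℚ_[p]) := by
    push_cast
    ring
  rw [padicEll, hfactor, padicL_mul_unit (hw.pow _), padicL_p_pow_mul]

theorem padicEll_mul_pow_eq_iff (hl : l ≠ 0) (hlm : l ∣ m) (hc : c ≠ 0)
    (hr : (padicL p l c).valuation ≤ l * d) (k k' : ℕ) {w w' : ℤ_[p]} (hw : IsUnit w)
    (hw' : IsUnit w') :
    padicEll p l d (c * (((p : ℤ_[p]) ^ k * w : ℤ_[p]) : ℚ_[p]) ^ m) =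
        padicEll p l d (c * (((p : ℤ_[p]) ^ k' * w' : ℤ_[p]) : ℚ_[p]) ^ m) ↔
      PadicInt.toZModPow (l * d - (padicL p l c).valuation) (w ^ m) =
        PadicInt.toZModPow (l * d - (padicL p l c).valuation) (w' ^ m) := by
  rw [padicEll_mul_pow hlm k hw, padicEll_mul_pow hlm k' hw',
    PadicInt.toZModPow_mul_eq_iff (padicL_ne_zero hl hc) hr]

end padicEll

theorem intCast_pow_modEq_one_iff {p : ℕ} [Fact p.Prime] {s : ℕ} (a : ℤ) (m : ℕ) :
    a ^ m ≡ 1 [ZMOD (p : ℤ) ^ s] ↔ PadicInt.toZModPow s ((a : ℤ_[p]) ^ m) = 1 := by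
  rw [← Int.cast_pow, map_intCast, ← Int.cast_one (R := ZMod (p ^ s)),
    ZMod.intCast_eq_intCast_iff, Nat.cast_pow]

theorem forall_intCast_pow_modEq_one_iff {p : ℕ} [Fact p.Prime] {s : ℕ} (hs : s ≠ 0) (m : ℕ) :
    (∀ a : ℤ, Int.gcd a p = 1 → a ^ m ≡ 1 [ZMOD (p : ℤ) ^ s]) ↔
      ∀ w : ℤ_[p], IsUnit w → PadicInt.toZModPow s (w ^ m) = 1 := by
  refine ⟨fun h w hw => ?_, fun h a ha => ?_⟩
  · set v := (PadicInt.toZModPow s w).val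
    have hv : Nat.Coprime v p :=
      (ZMod.val_coe_unit_coprime (hw.map (PadicInt.toZModPow s)).unit).coprime_dvd_right
        (dvd_pow_self p hs)
    have hvw : PadicInt.toZModPow s ((v : ℤ) : ℤ_[p]) = PadicInt.toZModPow s w := by
      rw [Int.cast_natCast, map_natCast, ZMod.natCast_zmod_val]
    have := (intCast_pow_modEq_one_iff (v : ℤ) m).mp (h v (by rwa [Int.gcd_natCast_natCast]))
    rwa [map_pow, hvw, ← map_pow] at this
  · rw [intCast_pow_modEq_one_iff]
    exact h _ (PadicInt.isUnit_iff.mpr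
      (PadicInt.norm_intCast_eq_one_iff.mpr (Int.isCoprime_iff_gcd_eq_one.mpr ha)))

theorem EventuallyPeriodic.of_forall_eq {R : Type*} {a : ℕ → R} {x : R} (h : ∀ n, a n = x) :
    EventuallyPeriodic a :=
  ⟨1, le_rfl, 0, fun n _ => (h (n + 1)).trans (h n).symm⟩

section Periodicity

variable {p : ℕ} [Fact p.Prime] {l d m : ℕ} {c : ℚ_[p]} {θ : ℤ_[p]}

theorem natCast_sub_coe (n : ℕ) (θ : ℤ_[p]) :
    (n : ℚ_[p]) - θ = (((n : ℤ_[p]) - θ : ℤ_[p]) : ℚ_[p]) := by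
  push_cast
  ring

theorem exists_natCast_sub_eq (θ : ℤ_[p]) {T t : ℕ} {u : ℤ_[p]}
    (hT : (T : ℤ_[p]) = (p : ℤ_[p]) ^ t * u) (b : ℤ_[p]) (s N : ℕ) :
    ∃ n : ℕ, N ≤ n ∧ ∃ y : ℤ_[p],
      (n : ℤ_[p]) - θ = (p : ℤ_[p]) ^ (t + s) * (b + (p : ℤ_[p]) ^ s * y) ∧
      ((n + T : ℕ) : ℤ_[p]) - θ =
        (p : ℤ_[p]) ^ t * (u + (p : ℤ_[p]) ^ s * (b + (p : ℤ_[p]) ^ s * y)) := by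
  obtain ⟨n, hn, y, hy⟩ :=
    PadicInt.exists_natCast_eq_add_p_pow_mul (θ + (p : ℤ_[p]) ^ (t + s) * b) (t + s + s) N
  refine ⟨n, hn, y, ?_, ?_⟩
  · rw [hy]
    ring
  · rw [Nat.cast_add, hy, hT]
    ring

theorem dvd_of_eventuallyPeriodic (hl : l ≠ 0) (hd : d ≠ 0) (hc : c ≠ 0)
    (hper : EventuallyPeriodic fun n : ℕ => padicEll p l d (c * ((n : ℚ_[p]) - θ) ^ m)) :
    l ∣ m := by
  obtain ⟨T, hT, N, hN⟩ := hper
  obtain ⟨t, u, hu, hTu⟩ := 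
    PadicInt.exists_eq_p_pow_mul (Nat.cast_ne_zero.mpr (by omega) : (T : ℤ_[p]) ≠ 0)
  obtain ⟨n, hn, y, hx, hx'⟩ := exists_natCast_sub_eq θ hTu 1 1 N
  have hw := PadicInt.isUnit_add_p_pow_mul isUnit_one one_ne_zero y
  have hw' := PadicInt.isUnit_add_p_pow_mul hu one_ne_zero (1 + (p : ℤ_[p]) ^ 1 * y)
  have h := hN n hn
  simp only [natCast_sub_coe, hx, hx'] at h
  have hdvd := Int.ModEq.dvd (valuation_emod_eq_of_padicEll_mul_pow_eq hl hd hc hw' hw h)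
  push_cast at hdvd
  exact Int.natCast_dvd_natCast.mp (by convert hdvd using 1; ring)

theorem pow_eq_one_of_eventuallyPeriodic (hl : l ≠ 0) (hd : d ≠ 0) (hc : c ≠ 0)
    (hper : EventuallyPeriodic fun n : ℕ => padicEll p l d (c * ((n : ℚ_[p]) - θ) ^ m))
    (w : ℤ_[p]) (hw : IsUnit w) :
    PadicInt.toZModPow (l * d - (padicL p l c).valuation) (w ^ m) = 1 := by
  have hlm := dvd_of_eventuallyPeriodic hl hd hc hper
  obtain ⟨T, hT, N, hN⟩ := hper
  obtain ⟨t, u, hu, hTu⟩ := 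
    PadicInt.exists_eq_p_pow_mul (Nat.cast_ne_zero.mpr (by omega) : (T : ℤ_[p]) ≠ 0)
  have hr := valuation_padicL_lt_mul hl hd hc
  set s := l * d - (padicL p l c).valuation
  have hs : s ≠ 0 := by omega
  have hsame : ∀ b : ℤ_[p], IsUnit b →
      PadicInt.toZModPow s (b ^ m) = PadicInt.toZModPow s (u ^ m) := by
    intro b hb
    obtain ⟨n, hn, y, hx, hx'⟩ := exists_natCast_sub_eq θ hTu b s N
    have h := hN n hn
    simp only [natCast_sub_coe, hx, hx'] at h
    rw [padicEll_mul_pow_eq_iff hl hlm hc (by omega) _ _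
        (PadicInt.isUnit_add_p_pow_mul hu hs _) (PadicInt.isUnit_add_p_pow_mul hb hs y),
      map_pow, map_pow, PadicInt.toZModPow_add_p_pow_mul, PadicInt.toZModPow_add_p_pow_mul] at h
    rw [map_pow, map_pow, h]
  rw [hsame w hw, ← hsame 1 isUnit_one, one_pow, map_one]

theorem padicEll_mul_natCast_sub_pow_eq (hl : l ≠ 0) (hd : d ≠ 0) (hc : c ≠ 0)
    (hθ : ∀ n : ℕ, θ ≠ (n : ℤ_[p])) (hlm : l ∣ m)
    (hpow : ∀ w : ℤ_[p], IsUnit w →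
      PadicInt.toZModPow (l * d - (padicL p l c).valuation) (w ^ m) = 1) (n : ℕ) :
    padicEll p l d (c * ((n : ℚ_[p]) - θ) ^ m) = padicEll p l d c := by
  obtain ⟨k, w, hw, hx⟩ := PadicInt.exists_eq_p_pow_mul (sub_ne_zero.mpr (hθ n).symm)
  have hc1 : c = c * (((p : ℤ_[p]) ^ 0 * 1 : ℤ_[p]) : ℚ_[p]) ^ m := by simp
  rw [natCast_sub_coe, hx]
  conv_rhs => rw [hc1]
  rw [padicEll_mul_pow_eq_iff hl hlm hc (valuation_padicL_lt_mul hl hd hc).le k 0 hw isUnit_one,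
    hpow w hw, one_pow, map_one]

end Periodicity

theorem statement16_general (p : ℕ) [Fact p.Prime] (l d m : ℕ) (hl : 1 ≤ l) (hd : 1 ≤ d)
    (c : ℚ_[p]) (hc : c ≠ 0) (θ : ℤ_[p])
    (hθ : ∀ n : ℕ, θ ≠ (n : ℤ_[p])) :
    ((l ∣ m ∧ ∀ a : ℤ, Int.gcd a p = 1 →
        a ^ m ≡ 1 [ZMOD ((p : ℤ) ^ (l * d - (c.valuation % (l : ℤ)).toNat))]) ↔
      EventuallyPeriodic
        (fun n : ℕ => padicEll p l d (c * ((n : ℚ_[p]) - (θ : ℚ_[p])) ^ m))) ∧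
    (EventuallyPeriodic
        (fun n : ℕ => padicEll p l d (c * ((n : ℚ_[p]) - (θ : ℚ_[p])) ^ m)) ↔
      ∀ n : ℕ, padicEll p l d (c * ((n : ℚ_[p]) - (θ : ℚ_[p])) ^ m) = padicEll p l d c) := by
  have hl0 : l ≠ 0 := by omega
  have hd0 : d ≠ 0 := by omega
  have hr : (c.valuation % (l : ℤ)).toNat = (padicL p l c).valuation := by
    rw [← valuation_padicL hl0 hc, Int.toNat_natCast]
  have hs : l * d - (padicL p l c).valuation ≠ 0 :=
    Nat.sub_ne_zero_of_lt (valuation_padicL_lt_mul hl0 hd0 hc)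
  rw [hr, forall_intCast_pow_modEq_one_iff hs]
  have h13 := fun h : l ∣ m ∧ _ => padicEll_mul_natCast_sub_pow_eq hl0 hd0 hc hθ h.1 h.2
  refine ⟨⟨fun h => .of_forall_eq (h13 h), fun h => ?_⟩, ⟨fun h => h13 ?_, .of_forall_eq⟩⟩ <;>
    exact ⟨dvd_of_eventuallyPeriodic hl0 hd0 hc h, pow_eq_one_of_eventuallyPeriodic hl0 hd0 hc h⟩

/-- Equivalence of condition (C) with eventual periodicity, and with
constancy, of the sequence `(ℓ_{p^l,d}(c(n-θ)^m))_n`. -/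
theorem statement16 (p : ℕ) [Fact p.Prime] (l d m : ℕ) (hl : 1 ≤ l) (hd : 1 ≤ d)
    (hm : 1 ≤ m) (c : ℚ_[p]) (hc : c ≠ 0) (θ : ℤ_[p])
    (hθ : ∀ n : ℕ, θ ≠ (n : ℤ_[p])) :
    ((l ∣ m ∧ ∀ a : ℤ, Int.gcd a p = 1 →
        a ^ m ≡ 1 [ZMOD ((p : ℤ) ^ (l * d - (c.valuation % (l : ℤ)).toNat))]) ↔
      EventuallyPeriodic
        (fun n : ℕ => padicEll p l d (c * ((n : ℚ_[p]) - (θ : ℚ_[p])) ^ m))) ∧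
    (EventuallyPeriodic
        (fun n : ℕ => padicEll p l d (c * ((n : ℚ_[p]) - (θ : ℚ_[p])) ^ m)) ↔
      ∀ n : ℕ, padicEll p l d (c * ((n : ℚ_[p]) - (θ : ℚ_[p])) ^ m) = padicEll p l d c) :=
  statement16_general p l d m hl hd c hc θ hθ
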